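/- Gusfield's sheltering lemma (subtraction form): Let X be a minimum x-y-cut side with x ∈ X, y ∉ X, and let H be a minimum u-v-cut side with u, v ∉ X and x ∉ H. Then H \ X is also a minimum u-v-cut side: cost(H \ X) ≤ cost(H) and H \ X separates u and v. -/

import Mathlib

open Finset

variable {V : Type*}

/-- Cost of the cut given by side `S`: sum of costs of ordered pairs crossing the cut. -/
def cutCost [Fintype V] [DecidableEq V] (c : V → V → NNReal) (S : Finset V) : NNReal :=
  ∑ x ∈ S, ∑ y ∈ Sᶜ, c x y

/-- Minimum `u`-`v`-cut value. -/
noncomputable def minCut [Fintype V] [DecidableEq V] (c : V → V → NNReal) (u v : V) : NNReal :=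
  sInf {w : NNReal | ∃ S : Finset V, u ∈ S ∧ v ∉ S ∧ cutCost c S = w}

/-!
The cut function of a symmetric weight is posimodular:
`cost (X \ H) + cost (H \ X) ≤ cost X + cost H`, which after doubling is a pointwise inequality
between the indicators "`a` and `b` lie on different sides". Since `X \ H` still separates `x`
from `y`, minimality of `X` gives `cost X ≤ cost (X \ H)`, and posimodularity leaves
`cost (H \ X) ≤ cost H`.
-/

section CutCost

variable [Fintype V] [DecidableEq V] (c : V → V → NNReal)

lemma cutCost_eq_sum_ite (S : Finset V) :
    cutCost c S = ∑ a, ∑ b, if a ∈ S ∧ b ∉ S then c a b else 0 := by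
  simp only [cutCost, ite_and, Finset.sum_ite_irrel, Fintype.sum_ite_mem, Finset.sum_const_zero,
    ← Finset.mem_compl]

lemma two_mul_cutCost (hsymm : ∀ a b, c a b = c b a) (S : Finset V) :
    2 * cutCost c S = ∑ a, ∑ b, if (a ∈ S ↔ b ∉ S) then c a b else 0 := by
  have hswap : cutCost c S = ∑ a, ∑ b, if b ∈ S ∧ a ∉ S then c a b else 0 := by
    rw [cutCost_eq_sum_ite, Finset.sum_comm]
    simp only [hsymm]
  rw [two_mul]
  nth_rw 2 [hswap]
  rw [cutCost_eq_sum_ite, ← Finset.sum_add_distrib]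
  refine Finset.sum_congr rfl fun a _ => ?_
  rw [← Finset.sum_add_distrib]
  refine Finset.sum_congr rfl fun b _ => ?_
  by_cases ha : a ∈ S <;> by_cases hb : b ∈ S <;> simp [ha, hb]

lemma cutCost_sdiff_add_cutCost_sdiff_le (hsymm : ∀ a b, c a b = c b a) (X H : Finset V) :
    cutCost c (X \ H) + cutCost c (H \ X) ≤ cutCost c X + cutCost c H := by
  refine le_of_mul_le_mul_left ?_ (two_pos : (0 : NNReal) < 2)
  simp only [mul_add, two_mul_cutCost c hsymm, ← Finset.sum_add_distrib]
  refine Finset.sum_le_sum fun a _ => Finset.sum_le_sum fun b _ => ?_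
  by_cases haX : a ∈ X <;> by_cases haH : a ∈ H <;> by_cases hbX : b ∈ X <;>
    by_cases hbH : b ∈ H <;> simp [haX, haH, hbX, hbH]

lemma minCut_le_cutCost {u v : V} {S : Finset V} (hu : u ∈ S) (hv : v ∉ S) :
    minCut c u v ≤ cutCost c S :=
  csInf_le (OrderBot.bddBelow _) ⟨S, hu, hv, rfl⟩

end CutCost

theorem gusfield_shelter_diff_general [Fintype V] [DecidableEq V] (c : V → V → NNReal)
    (hsymm : ∀ x y, c x y = c y x) (x y u v : V) (X H : Finset V)
    (hxX : x ∈ X) (hyX : y ∉ X) (hXmin : cutCost c X = minCut c x y)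
    (huX : u ∉ X)
    (huH : u ∈ H) (hvH : v ∉ H) (hxH : x ∉ H) :
    cutCost c (H \ X) ≤ cutCost c H ∧ u ∈ H \ X ∧ v ∉ H \ X := by
  have hX : cutCost c X ≤ cutCost c (X \ H) :=
    hXmin ▸ minCut_le_cutCost c (mem_sdiff.2 ⟨hxX, hxH⟩) (fun h => hyX (mem_sdiff.1 h).1)
  have hposi := cutCost_sdiff_add_cutCost_sdiff_le c hsymm X H
  exact ⟨le_of_add_le_add_left ((add_le_add_left hX _).trans hposi),
    mem_sdiff.2 ⟨huH, huX⟩, fun h => hvH (mem_sdiff.1 h).1⟩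

theorem gusfield_shelter_diff [Fintype V] [DecidableEq V] (c : V → V → NNReal)
    (hsymm : ∀ x y, c x y = c y x) (x y u v : V) (X H : Finset V)
    (hxX : x ∈ X) (hyX : y ∉ X) (hXmin : cutCost c X = minCut c x y)
    (huX : u ∉ X) (hvX : v ∉ X)
    (huH : u ∈ H) (hvH : v ∉ H) (hxH : x ∉ H) (hHmin : cutCost c H = minCut c u v) :
    cutCost c (H \ X) ≤ cutCost c H ∧ u ∈ H \ X ∧ v ∉ H \ X :=
  gusfield_shelter_diff_general c hsymm x y u v X H hxX hyX hXmin huX huH hvH hxH
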